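/- Two sequences of predense-below-p partitions are equivalent below p if and only if their associated generic functions agree for every generic filter containing p: for sequences D⃗ = ⟨(D₀ⁱ,D₁ⁱ) : i ∈ a⟩ and E⃗ = ⟨(E₀ⁱ,E₁ⁱ) : i ∈ a⟩ of predense ≤ p partitions, D⃗ and E⃗ are equivalent ≤ p iff for every generic filter G ∋ p, the functions f_D⃗^G and f_E⃗^G from a to 2 are equal, where f(i) = 0 ↔ G ∩ D₀ⁱ ≠ ∅. -/

import Mathlib

variable {P : Type*} [Preorder P]

/-- q meets D if q extends an element of D. -/
def Meets (q : P) (D : Set P) : Prop := ∃ r ∈ D, q ≤ r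

/-- Compatibility: a common lower bound exists. -/
def Compat (p q : P) : Prop := ∃ r : P, r ≤ p ∧ r ≤ q

/-- D is dense below p. -/
def DenseBelow (D : Set P) (p : P) : Prop := ∀ q ≤ p, ∃ r ≤ q, r ∈ D

/-- D is predense below p. -/
def PredenseBelow (D : Set P) (p : P) : Prop := ∀ q ≤ p, ∃ r ∈ D, Compat q r

/-- G is a generic filter: upward closed, directed, and meeting every dense class. -/
def IsGeneric (G : Set P) : Prop :=
  (∀ p ∈ G, ∀ q, p ≤ q → q ∈ G) ∧
  (∀ p ∈ G, ∀ q ∈ G, ∃ r ∈ G, r ≤ p ∧ r ≤ q) ∧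
  (∀ D : Set P, (∀ p : P, ∃ q ∈ D, q ≤ p) → (G ∩ D).Nonempty)

/-! If `q` meets `D₀ ∪ D₁` (it decides the partition), then a generic `G ∋ q` meets `D₀` iff `q`
does, and such `q` are dense below `p`. So a generic `G ∋ p` contains a condition deciding both
partitions the same way whenever they are equivalent; conversely, a generic filter through any
condition deciding both partitions reads off how that condition decides them. -/

theorem Meets.mono {q r : P} {D : Set P} (hq : Meets q D) (hrq : r ≤ q) : Meets r D :=
  let ⟨x, hx, hqx⟩ := hq
  ⟨x, hx, hrq.trans hqx⟩

theorem isLowerSet_setOf_meets {D : Set P} : IsLowerSet {q | Meets q D} :=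
  fun _ _ hrq hq => Meets.mono hq hrq

theorem DenseBelow.inter {S T : Set P} {p : P} (hS : DenseBelow S p) (hT : DenseBelow T p)
    (hT' : IsLowerSet T) : DenseBelow (S ∩ T) p := by
  intro q hqp
  obtain ⟨r, hrq, hrT⟩ := hT q hqp
  obtain ⟨s, hsr, hsS⟩ := hS r (hrq.trans hqp)
  exact ⟨s, hsr.trans hrq, hsS, hT' hsr hrT⟩

theorem PredenseBelow.denseBelow_meets {D : Set P} {p : P} (hD : PredenseBelow D p) :
    DenseBelow {q | Meets q D} p := by
  intro q hqp
  obtain ⟨x, hxD, r, hrq, hrx⟩ := hD q hqp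
  exact ⟨r, hrq, x, hxD, hrx⟩

theorem IsGeneric.mem_of_le {G : Set P} (hG : IsGeneric G) {p q : P} (hp : p ∈ G) (hpq : p ≤ q) :
    q ∈ G :=
  hG.1 p hp q hpq

theorem IsGeneric.compat {G : Set P} (hG : IsGeneric G) {p q : P} (hp : p ∈ G) (hq : q ∈ G) :
    Compat p q :=
  let ⟨r, _, hrp, hrq⟩ := hG.2.1 p hp q hq
  ⟨r, hrp, hrq⟩

theorem IsGeneric.exists_mem_of_denseBelow {G : Set P} (hG : IsGeneric G) {p : P} (hp : p ∈ G)
    {S : Set P} (hS : DenseBelow S p) : ∃ q ∈ G, q ∈ S := by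
  have hdense : ∀ r : P, ∃ q ∈ S ∪ {q | ¬ Compat q p}, q ≤ r := by
    intro r
    by_cases hrp : Compat r p
    · obtain ⟨s, hsr, hsp⟩ := hrp
      obtain ⟨q, hqs, hqS⟩ := hS s hsp
      exact ⟨q, Or.inl hqS, hqs.trans hsr⟩
    · exact ⟨r, Or.inr hrp, le_rfl⟩
  obtain ⟨q, hqG, hqS | hqp⟩ := hG.2.2 _ hdense
  · exact ⟨q, hqG, hqS⟩
  · exact absurd (hG.compat hqG hp) hqp

theorem IsGeneric.nonempty_inter_iff_meets {G : Set P} (hG : IsGeneric G) {q : P} (hq : q ∈ G)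
    {D₀ D₁ : Set P} (hqD : Meets q (D₀ ∪ D₁)) (hinc : ∀ x ∈ D₀, ∀ y ∈ D₁, ¬ Compat x y) :
    (G ∩ D₀).Nonempty ↔ Meets q D₀ := by
  refine ⟨fun ⟨x, hxG, hxD₀⟩ => ?_, fun ⟨x, hxD₀, hqx⟩ => ⟨x, hG.mem_of_le hq hqx, hxD₀⟩⟩
  obtain ⟨y, hyD₀ | hyD₁, hqy⟩ := hqD
  · exact ⟨y, hyD₀, hqy⟩
  · obtain ⟨r, hrx, hrq⟩ := hG.compat hxG hq
    exact absurd ⟨r, hrx, hrq.trans hqy⟩ (hinc x hxD₀ y hyD₁)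

/-- Two sequences of predense-below-p partitions are equivalent below p
iff their associated generic functions f(i) = 0 ↔ G ∩ D₀ⁱ ≠ ∅ agree for every generic
filter containing p. -/
theorem equiv_partitions_iff_generic_functions_agree
    (p : P) {ι : Type*} (D₀ D₁ E₀ E₁ : ι → Set P)
    (hD : ∀ i, PredenseBelow (D₀ i ∪ D₁ i) p ∧
      ∀ x ∈ D₀ i, ∀ y ∈ D₁ i, ¬ Compat x y)
    (hE : ∀ i, PredenseBelow (E₀ i ∪ E₁ i) p ∧
      ∀ x ∈ E₀ i, ∀ y ∈ E₁ i, ¬ Compat x y)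
    (hex : ∀ q : P, ∃ G : Set P, q ∈ G ∧ IsGeneric G) :
    (∀ i, DenseBelow {q | Meets q (D₀ i) ↔ Meets q (E₀ i)} p) ↔
      (∀ G : Set P, IsGeneric G → p ∈ G →
        ∀ i, ((G ∩ D₀ i).Nonempty ↔ (G ∩ E₀ i).Nonempty)) := by
  constructor
  · intro hequiv G hG hpG i
    have hdense : DenseBelow ({q | Meets q (D₀ i) ↔ Meets q (E₀ i)} ∩
        ({q | Meets q (D₀ i ∪ D₁ i)} ∩ {q | Meets q (E₀ i ∪ E₁ i)})) p :=
      (hequiv i).inter ((hD i).1.denseBelow_meets.inter (hE i).1.denseBelow_meets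
        isLowerSet_setOf_meets) (isLowerSet_setOf_meets.inter isLowerSet_setOf_meets)
    obtain ⟨q, hqG, hiff, hqD, hqE⟩ := hG.exists_mem_of_denseBelow hpG hdense
    rw [hG.nonempty_inter_iff_meets hqG hqD (hD i).2, hG.nonempty_inter_iff_meets hqG hqE (hE i).2]
    exact hiff
  · intro hagree i q hq
    obtain ⟨r, hrq, hrD, hrE⟩ :=
      (hD i).1.denseBelow_meets.inter (hE i).1.denseBelow_meets isLowerSet_setOf_meets q hq
    obtain ⟨G, hrG, hG⟩ := hex r
    refine ⟨r, hrq, ?_⟩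
    show Meets r (D₀ i) ↔ Meets r (E₀ i)
    rw [← hG.nonempty_inter_iff_meets hrG hrD (hD i).2,
      ← hG.nonempty_inter_iff_meets hrG hrE (hE i).2]
    exact hagree G hG (hG.mem_of_le hrG (hrq.trans hq)) i
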